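/- Let ν > 0 and fix λ > 0. Then, as t → ∞, K_1(t;λ) = (t+λ)^{-2ν} ∫_1^{t/λ} ((v+1)^{2ν} − v^{2ν}) / v^{ν+1} dv + O(t^{-ν-1}); that is, there exist constants C > 0 and T > λ such that for all t ≥ T, |K_1(t;λ) − (t+λ)^{-2ν} ∫_1^{t/λ} ((v+1)^{2ν} − v^{2ν}) v^{-(ν+1)} dv| ≤ C t^{-ν-1}. -/

import Mathlib

/-!
Put `s = t + λ`. Folding `[λ, t]` at its midpoint `s / 2` by `u ↦ s - u` turns
`∫_λ^t u^{-(ν+1)} (s - u)^{-ν} du` into `∫_{s/2}^t s u^{-(ν+1)} (s - u)^{-(ν+1)} du`, and the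
substitution `v = u / (s - u)`, which maps `[s/2, t]` onto `[1, t/λ]`, turns
`(v + 1)^{2ν} v^{-(ν+1)} dv` into `s^{2ν}` times the same kernel. The remaining integrals are
elementary and give the exact identity
`K₁ - s^{-2ν} ∫_1^{t/λ} … = ((t/λ)^ν - 1) (s^{-2ν} - t^{-2ν}) / ν`,
which is `O(t^{-ν-1})` because `t^{-2ν} - s^{-2ν} ≤ 2νλ t^{-2ν-1}`.
-/

/-- `K₁(t;λ) = ∫_λ^t u^{-(ν+1)} ((t+λ−u)^{-ν} − t^{-ν}) du`. -/
noncomputable def K₁ (ν t lam : ℝ) : ℝ :=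
  ∫ u in lam..t, u ^ (-(ν + 1)) * ((t + lam - u) ^ (-ν) - t ^ (-ν))

open Real Set intervalIntegral
open MeasureTheory (volume)

theorem one_sub_mul_le_one_add_rpow_neg {h p : ℝ} (hh : -1 < h) (hp : 0 ≤ p) :
    1 - p * h ≤ (1 + h) ^ (-p) := by
  have h1 : 0 < 1 + h := by linarith
  calc 1 - p * h ≤ 1 + log (1 + h) * -p := by
        nlinarith [log_le_sub_one_of_pos h1]
    _ ≤ exp (log (1 + h) * -p) := add_one_le_exp _ |>.trans' (by linarith)
    _ = (1 + h) ^ (-p) := (rpow_def_of_pos h1 _).symm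

theorem rpow_neg_sub_rpow_neg_add_le {t h p : ℝ} (ht : 0 < t) (hh : -t < h) (hp : 0 ≤ p) :
    t ^ (-p) - (t + h) ^ (-p) ≤ p * h * t ^ (-p - 1) := by
  have hht : -1 < h / t := by rwa [lt_div_iff₀ ht, neg_one_mul]
  have hsplit : (t + h) ^ (-p) = t ^ (-p) * (1 + h / t) ^ (-p) := by
    rw [← mul_rpow ht.le (by linarith), mul_add, mul_one, mul_div_cancel₀ _ ht.ne']
  have htp : t ^ (-p - 1) = t ^ (-p) / t := by rw [rpow_sub_one ht.ne']
  rw [hsplit, htp]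
  have := mul_le_mul_of_nonneg_left (one_sub_mul_le_one_add_rpow_neg hht hp)
    (rpow_nonneg ht.le (-p))
  field_simp at this ⊢
  linarith

theorem integral_eq_integral_add_comp_sub {E : Type*} [NormedAddCommGroup E] [NormedSpace ℝ E]
    {f : ℝ → E} {a b : ℝ} (hf : IntervalIntegrable f volume a b) :
    ∫ u in a..b, f u = ∫ u in (a + b) / 2..b, (f u + f (a + b - u)) := by
  have hm : (a + b) / 2 ∈ uIcc a b := by
    rcases le_total a b with h | h
    · rw [uIcc_of_le h]; constructor <;> linarith
    · rw [uIcc_of_ge h]; constructor <;> linarith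
  set m := (a + b) / 2
  have hf₁ : IntervalIntegrable f volume a m := hf.mono_set (uIcc_subset_uIcc_left hm)
  have hf₂ : IntervalIntegrable f volume m b := hf.mono_set (uIcc_subset_uIcc_right hm)
  have hreflect : ∫ u in m..b, f (a + b - u) = ∫ u in a..m, f u := by
    rw [integral_comp_sub_left, add_sub_cancel_right, show a + b - m = m by ring]
  have hf₃ : IntervalIntegrable (fun u => f (a + b - u)) volume m b := by
    simpa [show a + b - m = m by ring] using hf₁.symm.comp_sub_left (a + b)
  rw [integral_add hf₂ hf₃, hreflect, add_comm, integral_add_adjacent_intervals hf₁ hf₂]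

theorem rpow_neg_add_one_mul_rpow_neg_add_swap {a b ν : ℝ} (ha : 0 < a) (hb : 0 < b) :
    a ^ (-(ν + 1)) * b ^ (-ν) + b ^ (-(ν + 1)) * a ^ (-ν) =
      (a + b) * a ^ (-(ν + 1)) * b ^ (-(ν + 1)) := by
  rw [show -ν = -(ν + 1) + 1 by ring, rpow_add_one ha.ne', rpow_add_one hb.ne']
  ring

theorem intervalIntegrable_rpow_mul_sub_rpow {p q s a b : ℝ} (ha : 0 < a) (hab : a ≤ b)
    (hb : b < s) : IntervalIntegrable (fun u => u ^ p * (s - u) ^ q) volume a b := by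
  refine ContinuousOn.intervalIntegrable_of_Icc hab fun u hu => ContinuousAt.continuousWithinAt ?_
  have hu₀ : 0 < u := ha.trans_le hu.1
  have hsu : 0 < s - u := by linarith [hu.2]
  fun_prop (disch := first | positivity | (left; positivity))

theorem K₁_eq_integral_sub {ν t lam : ℝ} (hν : ν ≠ 0) (hlam : 0 < lam) (hlt : lam ≤ t) :
    K₁ ν t lam = (∫ u in lam..t, u ^ (-(ν + 1)) * (t + lam - u) ^ (-ν)) -
      t ^ (-ν) * (lam ^ (-ν) - t ^ (-ν)) / ν := by
  have h0 : (0 : ℝ) ∉ uIcc lam t := by rw [uIcc_of_le hlt]; exact fun h => hlam.not_ge h.1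
  have hexp : -(ν + 1) ≠ -1 := by contrapose! hν; linarith
  have hpow : ∫ u in lam..t, u ^ (-(ν + 1)) = (lam ^ (-ν) - t ^ (-ν)) / ν := by
    rw [integral_rpow (Or.inr ⟨hexp, h0⟩), show -(ν + 1) + 1 = -ν by ring]
    field_simp
    ring
  simp_rw [K₁, mul_sub]
  rw [integral_sub (intervalIntegrable_rpow_mul_sub_rpow hlam hlt (by linarith))
    ((intervalIntegrable_rpow (Or.inr h0)).mul_const _), integral_mul_const, hpow]
  ring

theorem integral_rpow_mul_sub_rpow_eq {ν t lam : ℝ} (hlam : 0 < lam) (hlt : lam ≤ t) :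
    ∫ u in lam..t, u ^ (-(ν + 1)) * (t + lam - u) ^ (-ν) =
      ∫ u in (t + lam) / 2..t, (t + lam) * u ^ (-(ν + 1)) * (t + lam - u) ^ (-(ν + 1)) := by
  rw [integral_eq_integral_add_comp_sub
    (intervalIntegrable_rpow_mul_sub_rpow hlam hlt (by linarith)), add_comm lam t]
  refine integral_congr fun u hu => ?_
  rw [uIcc_of_le (by linarith)] at hu
  have hu₀ : 0 < u := by linarith [hu.1]
  have hsu : 0 < t + lam - u := by linarith [hu.2]
  simp only [sub_sub_cancel]
  rw [rpow_neg_add_one_mul_rpow_neg_add_swap hu₀ hsu, add_sub_cancel]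

theorem integral_add_one_rpow_div_rpow_eq {ν s a b : ℝ} (ha : 0 < a) (hab : a ≤ b) (hb : b < s) :
    ∫ v in a / (s - a)..b / (s - b), (v + 1) ^ (2 * ν) / v ^ (ν + 1) =
      s ^ (2 * ν) * ∫ u in a..b, s * u ^ (-(ν + 1)) * (s - u) ^ (-(ν + 1)) := by
  have hI : ∀ u ∈ uIcc a b, 0 < u ∧ 0 < s - u := fun u hu => by
    rw [uIcc_of_le hab] at hu
    exact ⟨ha.trans_le hu.1, by linarith [hu.2]⟩
  have hderiv : ∀ u ∈ uIcc a b, HasDerivAt (fun u => u / (s - u)) (s / (s - u) ^ 2) u :=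
    fun u hu => ((hasDerivAt_id' u).div ((hasDerivAt_id' u).const_sub s)
      (hI u hu).2.ne').congr_deriv (by ring)
  have hderiv_cont : ContinuousOn (fun u => s / (s - u) ^ 2) (uIcc a b) := fun u hu => by
    have := (hI u hu).2
    exact ContinuousAt.continuousWithinAt (by fun_prop (disch := positivity))
  have hg : ContinuousOn (fun v : ℝ => (v + 1) ^ (2 * ν) / v ^ (ν + 1)) (Ioi 0) :=
    fun v (hv : 0 < v) => ContinuousAt.continuousWithinAt
      (by fun_prop (disch := first | positivity | (left; positivity)))
  have himage : (fun u => u / (s - u)) '' uIcc a b ⊆ Ioi 0 := by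
    rintro _ ⟨u, hu, rfl⟩
    exact div_pos (hI u hu).1 (hI u hu).2
  rw [← integral_comp_mul_deriv' hderiv hderiv_cont (hg.mono himage), ← integral_const_mul]
  refine integral_congr fun u hu => ?_
  obtain ⟨hu₀, hsu⟩ := hI u hu
  have hsq : (s - u) ^ (2 * ν) * (s - u) ^ 2 = ((s - u) ^ (ν + 1)) ^ 2 := by
    rw [← rpow_mul_natCast hsu.le, ← rpow_add_natCast hsu.ne']
    ring_nf
  have hs : u / (s - u) + 1 = s / (s - u) := by field_simp; ring
  simp only [Function.comp, hs]
  rw [div_rpow (by linarith) hsu.le, div_rpow hu₀.le hsu.le, rpow_neg hu₀.le, rpow_neg hsu.le]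
  field_simp
  linear_combination (-(s ^ (2 * ν) * s)) * hsq

theorem integral_sub_rpow_div_rpow_eq {ν x : ℝ} (hν : 0 < ν) (hx : 1 ≤ x) :
    ∫ v in (1 : ℝ)..x, ((v + 1) ^ (2 * ν) - v ^ (2 * ν)) / v ^ (ν + 1) =
      (∫ v in (1 : ℝ)..x, (v + 1) ^ (2 * ν) / v ^ (ν + 1)) - (x ^ ν - 1) / ν := by
  have hcont : ∀ p : ℝ, ContinuousOn (fun v : ℝ => (v + p) ^ (2 * ν) / v ^ (ν + 1)) (Icc 1 x) :=
    fun p v hv => by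
      have : 0 < v := by linarith [hv.1]
      exact ContinuousAt.continuousWithinAt
        (by fun_prop (disch := first | positivity | (right; positivity)))
  have hpow : ∫ v in (1 : ℝ)..x, v ^ (2 * ν) / v ^ (ν + 1) = (x ^ ν - 1) / ν := by
    rw [integral_congr (g := fun v => v ^ (ν - 1)) fun v hv => ?_,
      integral_rpow (Or.inl (by linarith)), sub_add_cancel, one_rpow]
    rw [uIcc_of_le hx] at hv
    rw [← rpow_sub (by linarith [hv.1])]
    ring_nf
  rw [← hpow, ← integral_sub ((hcont 1).intervalIntegrable_of_Icc hx)
    (by simpa using (hcont 0).intervalIntegrable_of_Icc hx)]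
  simp_rw [sub_div]

theorem K₁_sub_eq {ν t lam : ℝ} (hν : 0 < ν) (hlam : 0 < lam) (hlt : lam < t) :
    K₁ ν t lam - (t + lam) ^ (-(2 * ν)) *
        ∫ v in (1 : ℝ)..(t / lam), ((v + 1) ^ (2 * ν) - v ^ (2 * ν)) / v ^ (ν + 1) =
      ((t / lam) ^ ν - 1) * ((t + lam) ^ (-(2 * ν)) - t ^ (-(2 * ν))) / ν := by
  have ht : 0 < t := hlam.trans hlt
  have hsubst := integral_add_one_rpow_div_rpow_eq (ν := ν) (s := t + lam)
    (a := (t + lam) / 2) (b := t) (by positivity) (by linarith) (by linarith)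
  rw [show (t + lam) / 2 / (t + lam - (t + lam) / 2) = 1 by field_simp; ring,
    show t + lam - t = lam by ring] at hsubst
  rw [K₁_eq_integral_sub hν.ne' hlam hlt.le, integral_rpow_mul_sub_rpow_eq hlam hlt.le,
    integral_sub_rpow_div_rpow_eq hν ((one_le_div hlam).2 hlt.le), hsubst,
    div_rpow ht.le hlam.le]
  have hs : 0 < t + lam := by positivity
  have ht₂ : t ^ (-(2 * ν)) = ((t ^ ν) ^ 2)⁻¹ := by
    rw [rpow_neg ht.le, ← rpow_mul_natCast ht.le]
    ring_nf
  rw [rpow_neg hs.le, ht₂, rpow_neg ht.le, rpow_neg hlam.le]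
  have : t ^ ν ≠ 0 := by positivity
  have : lam ^ ν ≠ 0 := by positivity
  have : (t + lam) ^ (2 * ν) ≠ 0 := by positivity
  field_simp
  ring

theorem abs_K₁_sub_le {ν t lam : ℝ} (hν : 0 < ν) (hlam : 0 < lam) (hlt : lam < t) :
    |K₁ ν t lam - (t + lam) ^ (-(2 * ν)) *
        ∫ v in (1 : ℝ)..(t / lam), ((v + 1) ^ (2 * ν) - v ^ (2 * ν)) / v ^ (ν + 1)| ≤
      2 * lam ^ (1 - ν) * t ^ (-(ν + 1)) := by
  have ht : 0 < t := hlam.trans hlt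
  have hX : 1 ≤ (t / lam) ^ ν := one_le_rpow ((one_le_div hlam).2 hlt.le) hν.le
  have hD₀ : (t + lam) ^ (-(2 * ν)) ≤ t ^ (-(2 * ν)) :=
    rpow_le_rpow_of_nonpos ht (by linarith) (by linarith)
  have hD : t ^ (-(2 * ν)) - (t + lam) ^ (-(2 * ν)) ≤ 2 * ν * lam * t ^ (-(2 * ν) - 1) :=
    rpow_neg_sub_rpow_neg_add_le ht (by linarith) (by positivity)
  have hpow : (t / lam) ^ ν * t ^ (-(2 * ν) - 1) * lam = lam ^ (1 - ν) * t ^ (-(ν + 1)) := by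
    rw [div_rpow ht.le hlam.le, rpow_sub hlam, rpow_one,
      show -(2 * ν) - 1 = -(ν + 1) - ν by ring, rpow_sub ht]
    have : t ^ ν ≠ 0 := by positivity
    have : lam ^ ν ≠ 0 := by positivity
    field_simp
  rw [K₁_sub_eq hν hlam hlt, abs_div, abs_of_pos hν, abs_mul, abs_of_nonneg (by linarith),
    abs_of_nonpos (by linarith), div_le_iff₀ hν]
  calc ((t / lam) ^ ν - 1) * -((t + lam) ^ (-(2 * ν)) - t ^ (-(2 * ν)))
      ≤ (t / lam) ^ ν * (2 * ν * lam * t ^ (-(2 * ν) - 1)) := by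
        gcongr <;> linarith
    _ = 2 * lam ^ (1 - ν) * t ^ (-(ν + 1)) * ν := by
        linear_combination 2 * ν * hpow

theorem stmt_17 (ν lam : ℝ) (hν : 0 < ν) (hlam : 0 < lam) :
    ∃ C > 0, ∃ T > lam, ∀ t ≥ T,
      |K₁ ν t lam -
        (t + lam) ^ (-(2 * ν)) *
          ∫ v in (1 : ℝ)..(t / lam), ((v + 1) ^ (2 * ν) - v ^ (2 * ν)) / v ^ (ν + 1)| ≤
      C * t ^ (-(ν + 1)) :=
  ⟨2 * lam ^ (1 - ν), by positivity, 2 * lam, by linarith,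
    fun _ ht => abs_K₁_sub_le hν hlam (by linarith)⟩
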